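/- arXiv:0908.2508 — 9 statements merged into one kernel-verified Lean document; each statement's English description precedes it below -/
import Mathlib

section
/- Let P_1, P_2, W_1, W_2 be nonconstant complex polynomials such that P_1∘W_1 = P_2∘W_2 and deg W_1 divides deg W_2. Then there exists a polynomial S such that P_1 = P_2∘S and W_2 = S∘W_1. In particular, if deg W_1 = deg W_2, then there exists a polynomial μ of degree one such that P_1 = P_2∘μ and μ∘W_1 = W_2. -/
open Polynomial Finset

private lemma hasseDeriv_map' (f : Polynomial ℂ) (k : ℕ) :
    (f.map (C : ℂ →+* Polynomial ℂ)).hasseDeriv k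
      = (f.hasseDeriv k).map (C : ℂ →+* Polynomial ℂ) := by
  ext n
  simp [Polynomial.hasseDeriv_coeff, Polynomial.coeff_map]

private lemma taylor_comp' (f a b : Polynomial ℂ) :
    f.comp (a + b) =
      ∑ i ∈ range (f.natDegree + 1), ((f.hasseDeriv i).comp a) * b ^ i := by
  have h1 : f.comp (a + b) = ((f.map (C : ℂ →+* Polynomial ℂ)).taylor a).eval b := by
    rw [Polynomial.taylor_eval, Polynomial.eval_map, add_comm b a]
    rfl
  rw [h1, Polynomial.eval_eq_sum_range, Polynomial.natDegree_taylor,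
    Polynomial.natDegree_map_eq_of_injective (C_injective : Function.Injective (C : ℂ → Polynomial ℂ))]
  refine Finset.sum_congr rfl fun i _ => ?_
  rw [Polynomial.taylor_coeff, hasseDeriv_map', Polynomial.eval_map]
  rfl

private lemma core (P₁ P₂ W₁ W₂ Q : Polynomial ℂ)
    (hP₂ : 0 < P₂.natDegree) (hW₁ : 0 < W₁.natDegree)
    (h : P₁.comp W₁ = P₂.comp W₂)
    (hdvd : W₁.natDegree ∣ W₂.natDegree)
    (hR0 : W₂ - Q.comp W₁ ≠ 0)
    (hlt : (W₂ - Q.comp W₁).natDegree < W₂.natDegree) :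
    W₁.natDegree ∣ (W₂ - Q.comp W₁).natDegree := by
  set t := W₁.natDegree with ht
  set m := W₂.natDegree with hm
  set R := W₂ - Q.comp W₁ with hR
  set Y := Q.comp W₁ with hY
  set d₂ := P₂.natDegree with hd₂
  set r' := R.natDegree with hr'
  -- W₂ ≠ 0
  have hmpos : 0 < m := lt_of_le_of_lt (Nat.zero_le _) hlt
  have hW₂ne : W₂ ≠ 0 := by
    intro h0
    rw [hm, h0, natDegree_zero] at hmpos
    exact lt_irrefl 0 hmpos
  -- degree facts about Y
  have hdegRlt : R.degree < W₂.degree := by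
    calc R.degree ≤ (r' : WithBot ℕ) := degree_le_natDegree
    _ < (m : WithBot ℕ) := by exact_mod_cast hlt
    _ = W₂.degree := (degree_eq_natDegree hW₂ne).symm
  have hYdeg : Y.degree = W₂.degree := by
    have : Y = W₂ - R := by rw [hR]; ring
    rw [this]
    exact degree_sub_eq_left_of_degree_lt hdegRlt
  have hYnat : Y.natDegree = m := by
    rw [hm]
    exact natDegree_eq_of_degree_eq hYdeg
  have hYne : Y ≠ 0 := by
    intro h0
    rw [h0, degree_zero, eq_comm, degree_eq_bot] at hYdeg
    exact hW₂ne hYdeg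
  have hYnotC : Y ≠ C (Y.coeff 0) := by
    intro h0
    have := natDegree_C (Y.coeff 0)
    rw [← h0, hYnat] at this
    omega
  -- Taylor expansion
  have hW₂eq : W₂ = Y + R := by rw [hR]; ring
  set A : Polynomial ℂ := ∑ i ∈ range d₂, (P₂.hasseDeriv (i + 1)).comp Y * R ^ i with hA
  have key : P₂.comp W₂ = P₂.comp Y + R * A := by
    rw [hW₂eq, taylor_comp']
    rw [← hd₂, Finset.sum_range_succ']
    rw [hasseDeriv_zero', pow_zero, mul_one, add_comm]
    congr 1
    rw [hA, Finset.mul_sum]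
    refine Finset.sum_congr rfl fun i _ => ?_
    ring
  -- A has natDegree (d₂ - 1) * m and is nonzero
  have hd₂eq : d₂ = (d₂ - 1) + 1 := by omega
  have hder : (derivative P₂).degree = ((d₂ - 1 : ℕ) : WithBot ℕ) :=
    degree_derivative_eq P₂ hP₂
  have hderne : derivative P₂ ≠ 0 := by
    intro h0; rw [h0, degree_zero] at hder; exact (WithBot.bot_ne_coe) hder
  have hdernat : (derivative P₂).natDegree = d₂ - 1 := natDegree_eq_of_degree_eq_some hder
  set main : Polynomial ℂ := (P₂.hasseDeriv 1).comp Y with hmainDef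
  have hmain : main = (derivative P₂).comp Y := by rw [hmainDef, hasseDeriv_one']
  have hmainne : main ≠ 0 := by
    rw [hmain]
    intro h0
    rcases comp_eq_zero_iff.mp h0 with h1 | h1
    · exact hderne h1
    · exact hYnotC h1.2
  have hmainnat : main.natDegree = (d₂ - 1) * m := by
    rw [hmain, natDegree_comp, hdernat, hYnat]
  set B : Polynomial ℂ := ∑ i ∈ range (d₂ - 1), (P₂.hasseDeriv (i + 1 + 1)).comp Y * R ^ (i + 1)
    with hB
  have hAeq : A = B + main := by
    rw [hA, hB, hmainDef]
    conv_lhs => rw [hd₂eq]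
    rw [Finset.sum_range_succ']
    simp
  have hBlt : B.degree < main.degree := by
    rw [degree_eq_natDegree hmainne, hmainnat]
    refine lt_of_le_of_lt (degree_sum_le _ _) ?_
    rw [Finset.sup_lt_iff (by exact WithBot.bot_lt_coe _)]
    intro i hi
    rw [Finset.mem_range] at hi
    refine lt_of_le_of_lt degree_le_natDegree ?_
    rw [Nat.cast_lt]
    calc ((P₂.hasseDeriv (i + 1 + 1)).comp Y * R ^ (i + 1)).natDegree
        ≤ ((P₂.hasseDeriv (i + 1 + 1)).comp Y).natDegree + (R ^ (i + 1)).natDegree :=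
          natDegree_mul_le
      _ ≤ (d₂ - (i + 2)) * m + (i + 1) * r' := by
          gcongr
          · rw [natDegree_comp, hYnat]
            gcongr
            exact natDegree_hasseDeriv_le P₂ (i + 1 + 1)
          · exact le_of_eq (by rw [natDegree_pow, hr'])
      _ < (d₂ - 1) * m := by
          have h1 : (d₂ - (i + 2)) + (i + 1) = d₂ - 1 := by omega
          have h2 : (i + 1) * r' < (i + 1) * m :=
            mul_lt_mul_of_pos_left hlt (Nat.succ_pos i)
          calc (d₂ - (i + 2)) * m + (i + 1) * r' < (d₂ - (i + 2)) * m + (i + 1) * m := by omega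
            _ = ((d₂ - (i + 2)) + (i + 1)) * m := by ring
            _ = (d₂ - 1) * m := by rw [h1]
  have hAdeg : A.degree = main.degree := by
    rw [hAeq]; exact degree_add_eq_right_of_degree_lt hBlt
  have hAne : A ≠ 0 := by
    intro h0; rw [h0, degree_zero, eq_comm, degree_eq_bot] at hAdeg; exact hmainne hAdeg
  have hAnat : A.natDegree = (d₂ - 1) * m := by
    rw [← hmainnat]; exact natDegree_eq_of_degree_eq hAdeg
  -- the composed difference
  have hG : R * A = (P₁ - P₂.comp Q).comp W₁ := by
    rw [sub_comp, comp_assoc, ← hY, h, key]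
    ring
  have hHne : P₁ - P₂.comp Q ≠ 0 := by
    intro h0
    rw [h0, zero_comp] at hG
    exact (mul_ne_zero hR0 hAne) hG
  have hdegeq : r' + (d₂ - 1) * m = (P₁ - P₂.comp Q).natDegree * t := by
    rw [← hAnat, hr', ← natDegree_mul hR0 hAne, hG, natDegree_comp]
  have h1 : t ∣ (d₂ - 1) * m := Dvd.dvd.mul_left hdvd _
  have h2 : t ∣ r' + (d₂ - 1) * m :=
    ⟨(P₁ - P₂.comp Q).natDegree, by rw [hdegeq, mul_comm]⟩
  exact (Nat.dvd_add_right h1).mp (by rwa [add_comm] at h2)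

private lemma cancel_lead (W₁ R : Polynomial ℂ) (hW₁ne : W₁ ≠ 0) (s : ℕ)
    (hs : R.natDegree = s * W₁.natDegree) (hR : R ≠ 0) :
    (R - C (R.leadingCoeff / W₁.leadingCoeff ^ s) * W₁ ^ s).degree < R.degree := by
  set c := R.leadingCoeff / W₁.leadingCoeff ^ s with hc
  have hlcW : W₁.leadingCoeff ^ s ≠ 0 := pow_ne_zero s (leadingCoeff_ne_zero.mpr hW₁ne)
  have hcne : c ≠ 0 := div_ne_zero (leadingCoeff_ne_zero.mpr hR) hlcW
  have hWs : W₁ ^ s ≠ 0 := pow_ne_zero s hW₁ne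
  have hne : C c * W₁ ^ s ≠ 0 := mul_ne_zero (by simpa using hcne) hWs
  apply degree_sub_lt
  · rw [degree_eq_natDegree hR, degree_eq_natDegree hne,
      natDegree_C_mul hcne, natDegree_pow, hs]
  · exact hR
  · rw [leadingCoeff_mul, leadingCoeff_C, leadingCoeff_pow, hc,
      div_mul_cancel₀ _ hlcW]

private lemma exists_comp (P₁ P₂ W₁ W₂ : Polynomial ℂ)
    (hP₂ : 0 < P₂.natDegree) (hW₁ : 0 < W₁.natDegree) (hW₂pos : 0 < W₂.natDegree)
    (h : P₁.comp W₁ = P₂.comp W₂)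
    (hdvd : W₁.natDegree ∣ W₂.natDegree) :
    ∃ S : Polynomial ℂ, W₂ = S.comp W₁ := by
  have hW₁ne : W₁ ≠ 0 := fun h0 => by simp [h0] at hW₁
  have hW₂ne : W₂ ≠ 0 := fun h0 => by simp [h0] at hW₂pos
  have main : ∀ r : ℕ, ∀ Q : Polynomial ℂ,
      (W₂ - Q.comp W₁).natDegree ≤ r → (W₂ - Q.comp W₁).natDegree < W₂.natDegree →
      ∃ S : Polynomial ℂ, W₂ = S.comp W₁ := by
    intro r
    induction r using Nat.strong_induction_on with
    | _ r ih =>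
      intro Q hle hlt
      by_cases hR0 : W₂ - Q.comp W₁ = 0
      · exact ⟨Q, by rwa [sub_eq_zero] at hR0⟩
      · obtain ⟨s, hs⟩ := core P₁ P₂ W₁ W₂ Q hP₂ hW₁ h hdvd hR0 hlt
        set R := W₂ - Q.comp W₁ with hR
        set c := R.leadingCoeff / W₁.leadingCoeff ^ s with hc
        have hlt2 : (R - C c * W₁ ^ s).degree < R.degree :=
          cancel_lead W₁ R hW₁ne s (by rw [hs, mul_comm]) hR0
        set Q' := Q + C c * X ^ s with hQ'
        have hkey : W₂ - Q'.comp W₁ = R - C c * W₁ ^ s := by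
          rw [hQ', add_comp, mul_comp, C_comp, X_pow_comp, hR]; ring
        by_cases hR0' : W₂ - Q'.comp W₁ = 0
        · exact ⟨Q', by rwa [sub_eq_zero] at hR0'⟩
        · have hnlt : (W₂ - Q'.comp W₁).natDegree < R.natDegree := by
            apply natDegree_lt_natDegree hR0'
            rw [hkey]; exact hlt2
          exact ih (W₂ - Q'.comp W₁).natDegree (lt_of_lt_of_le hnlt hle) Q' le_rfl
            (lt_trans hnlt hlt)
  set k := W₂.natDegree / W₁.natDegree with hk
  have hsk : W₂.natDegree = k * W₁.natDegree := by
    rw [hk, Nat.div_mul_cancel hdvd]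
  set c₀ := W₂.leadingCoeff / W₁.leadingCoeff ^ k with hc₀
  set Q₀ : Polynomial ℂ := C c₀ * X ^ k with hQ₀
  have hcomp : Q₀.comp W₁ = C c₀ * W₁ ^ k := by
    rw [hQ₀, mul_comp, C_comp, X_pow_comp]
  have hlt0 : (W₂ - Q₀.comp W₁).degree < W₂.degree := by
    rw [hcomp]
    exact cancel_lead W₁ W₂ hW₁ne k hsk hW₂ne
  by_cases hR0 : W₂ - Q₀.comp W₁ = 0
  · exact ⟨Q₀, by rwa [sub_eq_zero] at hR0⟩
  · have hnlt : (W₂ - Q₀.comp W₁).natDegree < W₂.natDegree :=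
      natDegree_lt_natDegree hR0 hlt0
    exact main _ Q₀ le_rfl hnlt

theorem stmt_3 (P₁ P₂ W₁ W₂ : Polynomial ℂ)
    (hP₁ : 0 < P₁.natDegree) (hP₂ : 0 < P₂.natDegree)
    (hW₁ : 0 < W₁.natDegree) (hW₂ : 0 < W₂.natDegree)
    (h : P₁.comp W₁ = P₂.comp W₂)
    (hdvd : W₁.natDegree ∣ W₂.natDegree) :
    (∃ S : Polynomial ℂ, P₁ = P₂.comp S ∧ W₂ = S.comp W₁) ∧
    (W₁.natDegree = W₂.natDegree →
      ∃ μ : Polynomial ℂ, μ.natDegree = 1 ∧ P₁ = P₂.comp μ ∧ μ.comp W₁ = W₂) := by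
  obtain ⟨S, hS⟩ := exists_comp P₁ P₂ W₁ W₂ hP₂ hW₁ hW₂ h hdvd
  have hW₁notC : W₁ ≠ C (W₁.coeff 0) := by
    intro h0
    have h1 := natDegree_C (W₁.coeff 0)
    rw [← h0] at h1
    omega
  have hP : P₁ = P₂.comp S := by
    have h0 : (P₁ - P₂.comp S).comp W₁ = 0 := by
      rw [sub_comp, comp_assoc, ← hS, h, sub_self]
    rcases comp_eq_zero_iff.mp h0 with h1 | h1
    · exact sub_eq_zero.mp h1
    · exact absurd h1.2 hW₁notC
  refine ⟨⟨S, hP, hS⟩, fun heq => ⟨S, ?_, hP, hS.symm⟩⟩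
  have hdc : W₂.natDegree = S.natDegree * W₁.natDegree := by
    rw [hS, natDegree_comp]
  have h1 : S.natDegree * W₁.natDegree = 1 * W₁.natDegree := by
    rw [one_mul]; omega
  exact Nat.eq_of_mul_eq_mul_right hW₁ h1
end

section
/- Let m_1, m_2, m_3 be positive integers and a, b complex numbers such that T_{m_1}(a) = T_{m_1}(b), T_{m_2}(a) = T_{m_2}(b) and T_{m_3}(a) = T_{m_3}(b). Then there exist two distinct indices i_1, i_2 ∈ {1,2,3} such that, with l = gcd(m_{i_1}, m_{i_2}), the equality T_l(a) = T_l(b) holds. -/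
open Polynomial

private lemma key_gcd (α β s : ℂ) (m n : ℕ)
    (hm : ∃ k : ℤ, (m : ℂ) * β = 2 * k * Real.pi + s * ((m : ℂ) * α))
    (hn : ∃ k : ℤ, (n : ℂ) * β = 2 * k * Real.pi + s * ((n : ℂ) * α)) :
    ∃ k : ℤ, ((Nat.gcd m n : ℕ) : ℂ) * β
      = 2 * k * Real.pi + s * (((Nat.gcd m n : ℕ) : ℂ) * α) := by
  obtain ⟨p, hp⟩ := hm
  obtain ⟨q, hq⟩ := hn
  refine ⟨m.gcdA n * p + m.gcdB n * q, ?_⟩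
  have hd : ((Nat.gcd m n : ℕ) : ℂ) = (m : ℂ) * (m.gcdA n : ℂ) + (n : ℂ) * (m.gcdB n : ℂ) := by
    have := Nat.gcd_eq_gcd_ab m n
    exact_mod_cast congrArg (Int.cast : ℤ → ℂ) this
  push_cast
  linear_combination (m.gcdA n : ℂ) * hp + (m.gcdB n : ℂ) * hq + (β - s * α) * hd

private lemma key_cos (α β s : ℂ) (hs : s = 1 ∨ s = -1) (m n : ℕ)
    (hm : ∃ k : ℤ, (m : ℂ) * β = 2 * k * Real.pi + s * ((m : ℂ) * α))
    (hn : ∃ k : ℤ, (n : ℂ) * β = 2 * k * Real.pi + s * ((n : ℂ) * α)) :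
    Complex.cos (((Nat.gcd m n : ℕ) : ℂ) * α) = Complex.cos (((Nat.gcd m n : ℕ) : ℂ) * β) := by
  obtain ⟨k, hk⟩ := key_gcd α β s m n hm hn
  rw [Complex.cos_eq_cos_iff]
  refine ⟨k, ?_⟩
  rcases hs with rfl | rfl
  · left; linear_combination hk
  · right; linear_combination hk

theorem stmt_10 (m₁ m₂ m₃ : ℕ) (h₁ : 0 < m₁) (h₂ : 0 < m₂) (h₃ : 0 < m₃)
    (a b : ℂ)
    (e₁ : (Polynomial.Chebyshev.T ℂ m₁).eval a = (Polynomial.Chebyshev.T ℂ m₁).eval b)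
    (e₂ : (Polynomial.Chebyshev.T ℂ m₂).eval a = (Polynomial.Chebyshev.T ℂ m₂).eval b)
    (e₃ : (Polynomial.Chebyshev.T ℂ m₃).eval a = (Polynomial.Chebyshev.T ℂ m₃).eval b) :
    (Polynomial.Chebyshev.T ℂ (Nat.gcd m₁ m₂)).eval a
      = (Polynomial.Chebyshev.T ℂ (Nat.gcd m₁ m₂)).eval b ∨
    (Polynomial.Chebyshev.T ℂ (Nat.gcd m₁ m₃)).eval a
      = (Polynomial.Chebyshev.T ℂ (Nat.gcd m₁ m₃)).eval b ∨
    (Polynomial.Chebyshev.T ℂ (Nat.gcd m₂ m₃)).eval a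
      = (Polynomial.Chebyshev.T ℂ (Nat.gcd m₂ m₃)).eval b := by
  obtain ⟨α, rfl⟩ := Complex.cos_surjective a
  obtain ⟨β, rfl⟩ := Complex.cos_surjective b
  -- rewrite hypotheses
  rw [Polynomial.Chebyshev.T_complex_cos, Polynomial.Chebyshev.T_complex_cos,
    Complex.cos_eq_cos_iff] at e₁ e₂ e₃
  have cast1 : ∀ m : ℕ, ((m : ℤ) : ℂ) = (m : ℂ) := by intro m; push_cast; ring
  rw [cast1] at e₁ e₂ e₃
  -- convert each to sign form
  have sign : ∀ m : ℕ, (∃ k : ℤ, (m : ℂ) * β = 2 * k * Real.pi + (m : ℂ) * α ∨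
      (m : ℂ) * β = 2 * k * Real.pi - (m : ℂ) * α) →
      (∃ k : ℤ, (m : ℂ) * β = 2 * k * Real.pi + (1 : ℂ) * ((m : ℂ) * α)) ∨
      (∃ k : ℤ, (m : ℂ) * β = 2 * k * Real.pi + (-1 : ℂ) * ((m : ℂ) * α)) := by
    rintro m ⟨k, h | h⟩
    · exact Or.inl ⟨k, by linear_combination h⟩
    · exact Or.inr ⟨k, by linear_combination h⟩
  have f₁ := sign m₁ e₁
  have f₂ := sign m₂ e₂
  have f₃ := sign m₃ e₃
  have conc : ∀ m n : ℕ,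
      Complex.cos (((Nat.gcd m n : ℕ) : ℂ) * α) = Complex.cos (((Nat.gcd m n : ℕ) : ℂ) * β) →
      (Polynomial.Chebyshev.T ℂ (Nat.gcd m n)).eval (Complex.cos α)
        = (Polynomial.Chebyshev.T ℂ (Nat.gcd m n)).eval (Complex.cos β) := by
    intro m n h
    rw [Polynomial.Chebyshev.T_complex_cos, Polynomial.Chebyshev.T_complex_cos, cast1]
    exact h
  rcases f₁ with g₁ | g₁ <;> rcases f₂ with g₂ | g₂ <;> rcases f₃ with g₃ | g₃
  · exact Or.inl (conc _ _ (key_cos α β 1 (Or.inl rfl) m₁ m₂ g₁ g₂))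
  · exact Or.inl (conc _ _ (key_cos α β 1 (Or.inl rfl) m₁ m₂ g₁ g₂))
  · exact Or.inr (Or.inl (conc _ _ (key_cos α β 1 (Or.inl rfl) m₁ m₃ g₁ g₃)))
  · exact Or.inr (Or.inr (conc _ _ (key_cos α β (-1) (Or.inr rfl) m₂ m₃ g₂ g₃)))
  · exact Or.inr (Or.inr (conc _ _ (key_cos α β 1 (Or.inl rfl) m₂ m₃ g₂ g₃)))
  · exact Or.inr (Or.inl (conc _ _ (key_cos α β (-1) (Or.inr rfl) m₁ m₃ g₁ g₃)))
  · exact Or.inl (conc _ _ (key_cos α β (-1) (Or.inr rfl) m₁ m₂ g₁ g₂))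
  · exact Or.inl (conc _ _ (key_cos α β (-1) (Or.inr rfl) m₁ m₂ g₁ g₂))
end

section
/- Let m_1, m_2 be odd positive integers with gcd(m_1, m_2) = 1, and let a be a complex number such that T_{m_1}(a) = 0 and T_{m_2}(a) = 0. Then a = 0. -/
/-!
Write `a = cos z`, so that `T_m(a) = cos (m z)`, and normalise `w = 2z/π`: then `T_m(a) = 0` says
exactly that `m w` is an odd integer. A Bézout relation `x m₁ + y m₂ = 1` makes
`w = x (m₁ w) + y (m₂ w)` an integer, which is odd because `m₁ w` is; hence `cos z = 0`.
-/

open Polynomial Real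

namespace Complex

theorem cos_eq_zero_of_cos_mul_eq_zero_of_isCoprime {m₁ m₂ : ℤ} (hm : IsCoprime m₁ m₂) {z : ℂ}
    (h₁ : cos (m₁ * z) = 0) (h₂ : cos (m₂ * z) = 0) : cos z = 0 := by
  rw [cos_eq_zero_iff] at h₁ h₂ ⊢
  obtain ⟨k₁, hk₁⟩ := h₁
  obtain ⟨k₂, hk₂⟩ := h₂
  obtain ⟨x, y, hxy⟩ := hm
  set N : ℤ := x * (2 * k₁ + 1) + y * (2 * k₂ + 1)
  have hz : z = N * π / 2 := by
    have hxy' : (x : ℂ) * m₁ + y * m₂ = 1 := by exact_mod_cast hxy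
    push_cast [N]
    linear_combination (-z) * hxy' + x * hk₁ + y * hk₂
  have hN : m₁ * N = 2 * k₁ + 1 := by
    have hπ : (π : ℂ) / 2 ≠ 0 := div_ne_zero (by exact_mod_cast Real.pi_ne_zero) two_ne_zero
    have : ((m₁ * N : ℤ) : ℂ) * (π / 2) = ((2 * k₁ + 1 : ℤ) : ℂ) * (π / 2) := by
      push_cast
      linear_combination hk₁ - (m₁ : ℂ) * hz
    exact_mod_cast mul_right_cancel₀ hπ this
  obtain ⟨s, hs⟩ : Odd N := (Int.odd_mul.mp (hN ▸ odd_two_mul_add_one k₁)).2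
  exact ⟨s, by rw [hz, hs]; push_cast; ring⟩

end Complex

namespace Polynomial.Chebyshev

theorem eq_zero_of_eval_T_eq_zero_of_isCoprime {m₁ m₂ : ℤ} (hm : IsCoprime m₁ m₂) {a : ℂ}
    (h₁ : (T ℂ m₁).eval a = 0) (h₂ : (T ℂ m₂).eval a = 0) : a = 0 := by
  obtain ⟨z, rfl⟩ := Complex.cos_surjective a
  rw [T_complex_cos] at h₁ h₂
  exact Complex.cos_eq_zero_of_cos_mul_eq_zero_of_isCoprime hm h₁ h₂

end Polynomial.Chebyshev

theorem stmt_11_general (m₁ m₂ : ℕ) (hgcd : Nat.gcd m₁ m₂ = 1) (a : ℂ)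
    (e₁ : (Polynomial.Chebyshev.T ℂ m₁).eval a = 0)
    (e₂ : (Polynomial.Chebyshev.T ℂ m₂).eval a = 0) :
    a = 0 :=
  Chebyshev.eq_zero_of_eval_T_eq_zero_of_isCoprime (Nat.isCoprime_iff_coprime.mpr hgcd) e₁ e₂

theorem stmt_11 (m₁ m₂ : ℕ) (h₁ : 0 < m₁) (h₂ : 0 < m₂)
    (hodd₁ : Odd m₁) (hodd₂ : Odd m₂) (hgcd : Nat.gcd m₁ m₂ = 1) (a : ℂ)
    (e₁ : (Polynomial.Chebyshev.T ℂ m₁).eval a = 0)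
    (e₂ : (Polynomial.Chebyshev.T ℂ m₂).eval a = 0) :
    a = 0 :=
  stmt_11_general m₁ m₂ hgcd a e₁ e₂
end

section
/- Let m_1, m_2 be odd positive integers with gcd(m_1, m_2) = 1, and let a, b be complex numbers such that T_{m_1}(a) = −T_{m_1}(b) and T_{m_2}(a) = −T_{m_2}(b). Then either a = −b, or T_{m_1 m_2}(a) = 1, or T_{m_1 m_2}(a) = −1. -/
open Polynomial

lemma cos_int_pi (k : ℤ) : Complex.cos (k * Real.pi) = 1 ∨ Complex.cos (k * Real.pi) = -1 := by
  rcases Int.even_or_odd k with ⟨j, hj⟩ | ⟨j, hj⟩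
  · left
    subst hj
    rw [show ((j + j : ℤ) : ℂ) * (Real.pi : ℂ) = (j : ℤ) * (2 * Real.pi) by push_cast; ring]
    exact Complex.cos_int_mul_two_pi j
  · right
    subst hj
    rw [show ((2 * j + 1 : ℤ) : ℂ) * (Real.pi : ℂ) = (j : ℤ) * (2 * Real.pi) + Real.pi by
      push_cast; ring]
    exact Complex.cos_int_mul_two_pi_add_pi j

theorem stmt_12 (m₁ m₂ : ℕ) (h₁ : 0 < m₁) (h₂ : 0 < m₂)
    (hodd₁ : Odd m₁) (hodd₂ : Odd m₂) (hgcd : Nat.gcd m₁ m₂ = 1) (a b : ℂ)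
    (e₁ : (Polynomial.Chebyshev.T ℂ m₁).eval a = -(Polynomial.Chebyshev.T ℂ m₁).eval b)
    (e₂ : (Polynomial.Chebyshev.T ℂ m₂).eval a = -(Polynomial.Chebyshev.T ℂ m₂).eval b) :
    a = -b ∨ (Polynomial.Chebyshev.T ℂ (m₁ * m₂)).eval a = 1 ∨
      (Polynomial.Chebyshev.T ℂ (m₁ * m₂)).eval a = -1 := by
  obtain ⟨α, rfl⟩ := Complex.cos_surjective a
  obtain ⟨β, rfl⟩ := Complex.cos_surjective b
  set γ : ℂ := β + Real.pi with hγ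
  have hπ : (Real.pi : ℂ) ≠ 0 := by exact_mod_cast Real.pi_ne_zero
  have hm₁ : (m₁ : ℂ) ≠ 0 := Nat.cast_ne_zero.mpr h₁.ne'
  have hm₂ : (m₂ : ℂ) ≠ 0 := Nat.cast_ne_zero.mpr h₂.ne'
  have key : ∀ m : ℕ, Odd m →
      (Polynomial.Chebyshev.T ℂ m).eval (Complex.cos α)
        = -(Polynomial.Chebyshev.T ℂ m).eval (Complex.cos β) →
      Complex.cos ((m : ℂ) * α) = Complex.cos ((m : ℂ) * γ) := by
    intro m hm e
    rw [Polynomial.Chebyshev.T_complex_cos, Polynomial.Chebyshev.T_complex_cos] at e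
    obtain ⟨j, hj⟩ := hm
    have h2 : Complex.cos ((m : ℂ) * γ) = -Complex.cos ((m : ℂ) * β) := by
      rw [hγ, mul_add, show (m : ℂ) * Real.pi = Real.pi + (j : ℤ) * (2 * Real.pi) by
        push_cast [hj]; ring, ← add_assoc, Complex.cos_add_int_mul_two_pi,
        Complex.cos_add_pi]
    rw [h2]
    exact_mod_cast e
  have c₁ := key m₁ hodd₁ e₁
  have c₂ := key m₂ hodd₂ e₂
  rw [Complex.cos_eq_cos_iff] at c₁ c₂
  obtain ⟨k₁, hk₁⟩ := c₁
  obtain ⟨k₂, hk₂⟩ := c₂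
  -- the "same sign" case gives the first alternative
  have same : ∀ s : ℂ, (s = 1 ∨ s = -1) →
      (m₁ : ℂ) * γ = 2 * k₁ * Real.pi + s * ((m₁ : ℂ) * α) →
      (m₂ : ℂ) * γ = 2 * k₂ * Real.pi + s * ((m₂ : ℂ) * α) →
      Complex.cos α = -Complex.cos β := by
    intro s hs ha hb
    have hkey : ((m₂ : ℤ) * k₁ : ℤ) = ((m₁ : ℤ) * k₂ : ℤ) := by
      have h0 : (((m₂ : ℤ) * k₁ : ℤ) : ℂ) * (2 * Real.pi) = (((m₁ : ℤ) * k₂ : ℤ) : ℂ) * (2 * Real.pi) := by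
        push_cast
        linear_combination (m₁ : ℂ) * hb - (m₂ : ℂ) * ha
      have h1 : (((m₂ : ℤ) * k₁ : ℤ) : ℂ) = (((m₁ : ℤ) * k₂ : ℤ) : ℂ) :=
        mul_right_cancel₀ (by simp [hπ]) h0
      exact_mod_cast h1
    have hdvd : (m₁ : ℤ) ∣ k₁ := by
      have hcop : IsCoprime (m₁ : ℤ) (m₂ : ℤ) := Nat.isCoprime_iff_coprime.mpr hgcd
      exact hcop.dvd_of_dvd_mul_left ⟨k₂, hkey⟩
    obtain ⟨j, hj⟩ := hdvd
    have hk : (k₁ : ℂ) = (m₁ : ℂ) * (j : ℂ) := by exact_mod_cast hj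
    have hγα : γ = s * α + (j : ℤ) * (2 * Real.pi) := by
      apply mul_left_cancel₀ hm₁
      rw [ha]
      linear_combination 2 * (Real.pi : ℂ) * hk
    have hcos : Complex.cos γ = Complex.cos α := by
      rw [hγα, Complex.cos_add_int_mul_two_pi]
      rcases hs with rfl | rfl
      · rw [one_mul]
      · rw [neg_one_mul, Complex.cos_neg]
    rw [← hcos, hγ, Complex.cos_add_pi]
  -- the "mixed sign" case gives the other alternatives
  have mixed : ∀ s : ℂ, (s = 1 ∨ s = -1) →
      (m₁ : ℂ) * γ = 2 * k₁ * Real.pi + s * ((m₁ : ℂ) * α) →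
      (m₂ : ℂ) * γ = 2 * k₂ * Real.pi - s * ((m₂ : ℂ) * α) →
      ∃ k : ℤ, ((m₁ : ℂ) * (m₂ : ℂ)) * α = (k : ℂ) * Real.pi := by
    intro s hs ha hb
    rcases hs with rfl | rfl
    · refine ⟨(m₁ : ℤ) * k₂ - (m₂ : ℤ) * k₁, ?_⟩
      push_cast
      linear_combination ((m₁ : ℂ)/2) * hb - ((m₂ : ℂ)/2) * ha
    · refine ⟨(m₂ : ℤ) * k₁ - (m₁ : ℤ) * k₂, ?_⟩
      push_cast
      linear_combination ((m₂ : ℂ)/2) * ha - ((m₁ : ℂ)/2) * hb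
  have conc_right : (∃ k : ℤ, ((m₁ : ℂ) * (m₂ : ℂ)) * α = (k : ℂ) * Real.pi) →
      (Polynomial.Chebyshev.T ℂ (m₁ * m₂)).eval (Complex.cos α) = 1 ∨
        (Polynomial.Chebyshev.T ℂ (m₁ * m₂)).eval (Complex.cos α) = -1 := by
    rintro ⟨k, hk⟩
    rw [Polynomial.Chebyshev.T_complex_cos]
    rw [show (((m₁ : ℤ) * (m₂ : ℤ) : ℤ) : ℂ) * α = (k : ℂ) * Real.pi by
      push_cast
      linear_combination hk]
    exact cos_int_pi k
  rcases hk₁ with ha | ha <;> rcases hk₂ with hb | hb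
  · exact Or.inl (same 1 (Or.inl rfl) (by linear_combination ha) (by linear_combination hb))
  · exact Or.inr (conc_right (mixed 1 (Or.inl rfl) (by linear_combination ha)
      (by linear_combination hb)))
  · exact Or.inr (conc_right (mixed (-1) (Or.inr rfl) (by linear_combination ha)
      (by linear_combination hb)))
  · exact Or.inl (same (-1) (Or.inr rfl) (by linear_combination ha) (by linear_combination hb))
end

section
/- Let R be a nonzero complex polynomial and let n > 1, s > 0 be integers. If the polynomial X^s·R(X)^n is linearly equivalent to a power, i.e., there exist an integer N ≥ 1 and polynomials μ, ν of degree one such that X^s·R(X)^n = μ∘X^N∘ν, then R is a monomial: R = c·X^t for some c ∈ ℂ, c ≠ 0, and integer t ≥ 0. -/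
/-!
Write `F = X ^ s * R ^ n = μ ∘ ν ^ N`. Since `n > 1`, every root `z` of `R` is a root of `F'`,
and `F' = μ' · (ν ^ N)'` is a nonzero constant times `ν ^ (N - 1)`, so `ν(z) = 0`. Then
`μ(0) = F(z) = 0`, and since `F(0) = 0` (as `s > 0`) also `ν(0) = 0`. The linear polynomial `ν`
has only one root, so every root of `R` is `0`, and over `ℂ` this makes `R` a monomial.
-/

open Polynomial

namespace Polynomial

theorem IsRoot.derivative_mul_pow {R : Type*} [CommSemiring R] {P Q : R[X]} {z : R} {n : ℕ}
    (hQ : Q.IsRoot z) (hn : 1 < n) : (derivative (P * Q ^ n)).IsRoot z := by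
  rw [IsRoot.def] at hQ ⊢
  simp [derivative_mul, derivative_pow, hQ, zero_pow (by omega : n - 1 ≠ 0),
    zero_pow (by omega : n ≠ 0)]

theorem derivative_eq_C_leadingCoeff_of_natDegree_eq_one {R : Type*} [Semiring R] {p : R[X]}
    (hp : p.natDegree = 1) : derivative p = C p.leadingCoeff := by
  nth_rw 1 [eq_X_add_C_of_natDegree_le_one hp.le]
  simp [leadingCoeff, hp]

section Domain

variable {R : Type*} [CommRing R] [IsDomain R]

theorem eq_of_isRoot_of_natDegree_eq_one {p : R[X]} (hp : p.natDegree = 1) {z w : R}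
    (hz : p.IsRoot z) (hw : p.IsRoot w) : z = w := by
  obtain ⟨a, ha, b, rfl⟩ := natDegree_eq_one.mp hp
  simp only [IsRoot.def, eval_add, eval_mul, eval_C, eval_X] at hz hw
  exact mul_left_cancel₀ ha (by linear_combination hz - hw)

theorem isRoot_of_isRoot_derivative_comp_pow [CharZero R] {μ ν : R[X]} (hμ : μ.natDegree = 1)
    (hν : ν.natDegree = 1) {N : ℕ} (hN : N ≠ 0) {z : R}
    (h : (derivative (μ.comp (ν ^ N))).IsRoot z) : ν.IsRoot z := by
  have hμ0 : μ.leadingCoeff ≠ 0 :=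
    leadingCoeff_ne_zero.mpr (ne_zero_of_natDegree_gt (hμ ▸ one_pos))
  have hν0 : ν.leadingCoeff ≠ 0 :=
    leadingCoeff_ne_zero.mpr (ne_zero_of_natDegree_gt (hν ▸ one_pos))
  rw [derivative_comp, derivative_pow, derivative_eq_C_leadingCoeff_of_natDegree_eq_one hμ,
    derivative_eq_C_leadingCoeff_of_natDegree_eq_one hν, IsRoot.def] at h
  simp only [eval_mul, eval_C, eval_pow, C_comp] at h
  exact eq_zero_of_pow_eq_zero (n := N - 1) (by simpa [hN, hμ0, hν0, -pow_eq_zero_iff] using h)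

end Domain

theorem exists_eq_C_mul_X_pow_of_forall_isRoot_eq_zero {K : Type*} [Field K] [IsAlgClosed K]
    {p : K[X]} (hp : p ≠ 0) (h : ∀ z, p.IsRoot z → z = 0) :
    ∃ (c : K) (t : ℕ), c ≠ 0 ∧ p = C c * X ^ t := by
  refine ⟨p.leadingCoeff, p.roots.card, leadingCoeff_ne_zero.mpr hp, ?_⟩
  have hroots : p.roots = Multiset.replicate p.roots.card 0 :=
    Multiset.eq_replicate_card.mpr fun z hz => h z (isRoot_of_mem_roots hz)
  conv_lhs =>
    rw [← C_leadingCoeff_mul_prod_multiset_X_sub_C (IsAlgClosed.card_roots_eq_natDegree (p := p)),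
      hroots]
  simp

end Polynomial

theorem stmt_14 (R : Polynomial ℂ) (hR : R ≠ 0) (n s : ℕ) (hn : 1 < n) (hs : 0 < s)
    (h : ∃ (N : ℕ) (μ ν : Polynomial ℂ), 1 ≤ N ∧ μ.natDegree = 1 ∧ ν.natDegree = 1 ∧
      X ^ s * R ^ n = μ.comp ((X ^ N : Polynomial ℂ).comp ν)) :
    ∃ (c : ℂ) (t : ℕ), c ≠ 0 ∧ R = C c * X ^ t := by
  obtain ⟨N, μ, ν, hN, hμ, hν, hF⟩ := h
  rw [pow_comp, X_comp] at hF
  refine exists_eq_C_mul_X_pow_of_forall_isRoot_eq_zero hR fun z hz => ?_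
  have hνz : ν.IsRoot z :=
    isRoot_of_isRoot_derivative_comp_pow hμ hν (by omega) (hF ▸ hz.derivative_mul_pow hn)
  have hμ0 : μ.IsRoot 0 := by
    have hFz : (X ^ s * R ^ n).IsRoot z := by simp [hz.eq_zero]; omega
    rwa [hF, IsRoot.def, eval_comp, eval_pow, hνz.eq_zero, zero_pow (by omega)] at hFz
  have hν0 : ν.IsRoot 0 := by
    have hF0 : (X ^ s * R ^ n).IsRoot 0 := by simp [hs.ne']
    rw [hF, IsRoot.def, eval_comp, eval_pow] at hF0
    exact eq_zero_of_pow_eq_zero (eq_of_isRoot_of_natDegree_eq_one hμ hF0 hμ0)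
  exact eq_of_isRoot_of_natDegree_eq_one hν hνz hν0
end

section
/- Let R be a nonzero complex polynomial and let n > 1, s > 0 be integers. If the polynomial X^s·R(X^n) is linearly equivalent to a power, i.e., there exist an integer N ≥ 1 and polynomials μ, ν of degree one such that X^s·R(X^n) = μ∘X^N∘ν, then R is a monomial: R = c·X^t for some c ∈ ℂ, c ≠ 0, and integer t ≥ 0. -/
/-!
Let ζ be a primitive `n`-th root of unity. `P = X ^ s * R(X ^ n)` satisfies `P(ζ z) = ζ ^ s P(z)`,
hence `P'(ζ z) = ζ ^ (s - 1) P'(z)`, so the critical points of `P` are stable under `z ↦ ζ z`.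
If `P = μ ∘ X ^ N ∘ ν` with `N ≥ 2`, its only critical point is the zero of `ν`, which therefore
is `0`; since also `P(0) = 0`, `P` is a monomial (for `N = 1` this is immediate). Comparing
coefficients in `X ^ s * R(X ^ n) = d * X ^ M` then shows that `R` is a monomial.
-/

open Polynomial

namespace Polynomial

section CommSemiring

variable {R : Type*} [CommSemiring R]

theorem X_pow_mul_comp_X_pow_comp_C_mul_X (p : R[X]) (s : ℕ) {n : ℕ} {ζ : R} (hζ : ζ ^ n = 1) :
    (X ^ s * p.comp (X ^ n)).comp (C ζ * X) = C (ζ ^ s) * (X ^ s * p.comp (X ^ n)) := by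
  simp only [mul_comp, X_pow_comp, comp_assoc, mul_pow, ← C_pow, hζ, C_1, one_mul]
  ring

theorem IsRoot.mul_of_comp_C_mul_X_eq {P : R[X]} {ζ c z : R}
    (hP : P.comp (C ζ * X) = C c * P) (hz : P.IsRoot z) : P.IsRoot (ζ * z) := by
  simpa [hz.eq_zero] using congrArg (eval z) hP

end CommSemiring

variable {K : Type*} [Field K]

theorem derivative_comp_C_mul_X_eq {P : K[X]} {ζ c : K} (hζ : ζ ≠ 0)
    (hP : P.comp (C ζ * X) = C c * P) :
    (derivative P).comp (C ζ * X) = C (c / ζ) * derivative P := by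
  have h := congrArg derivative hP
  rw [derivative_comp, derivative_C_mul_X, derivative_C_mul] at h
  rw [div_eq_mul_inv, mul_comm c, C_mul, mul_assoc, ← h, ← mul_assoc, ← C_mul,
    inv_mul_cancel₀ hζ, C_1, one_mul]

theorem eq_zero_of_C_mul_linear_pow_comp_C_mul_X_eq {e u v ζ c : K} {m : ℕ} (he : e ≠ 0)
    (hu : u ≠ 0) (hm : m ≠ 0) (hζ : ζ ≠ 1)
    (h : (C e * (C u * X + C v) ^ m).comp (C ζ * X) = C c * (C e * (C u * X + C v) ^ m)) :
    v = 0 := by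
  have hroot : (C e * (C u * X + C v) ^ m).IsRoot (-v / u) := by
    simp [field, hm]
  have hζroot := hroot.mul_of_comp_C_mul_X_eq h
  simp only [IsRoot, eval_mul, eval_C, eval_pow, eval_add, eval_X, mul_eq_zero, he, false_or,
    pow_eq_zero_iff hm] at hζroot
  have hv : v * (1 - ζ) = 0 := by
    field_simp at hζroot
    linear_combination hζroot
  exact (mul_eq_zero.mp hv).resolve_right (sub_ne_zero.mpr hζ.symm)

theorem exists_eq_C_mul_X_pow_of_comp_C_mul_X_eq [CharZero K] {P μ ν : K[X]} {N : ℕ} {ζ c : K}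
    (hζ₀ : ζ ≠ 0) (hζ₁ : ζ ≠ 1) (hP : P.comp (C ζ * X) = C c * P) (hP₀ : P.eval 0 = 0)
    (hN : 1 ≤ N) (hμ : μ.natDegree = 1) (hν : ν.natDegree = 1)
    (hPμν : P = μ.comp ((X ^ N).comp ν)) :
    ∃ (d : K) (M : ℕ), d ≠ 0 ∧ P = C d * X ^ M := by
  obtain ⟨a, ha, b, rfl⟩ := natDegree_eq_one.mp hμ
  obtain ⟨u, hu, v, rfl⟩ := natDegree_eq_one.mp hν
  simp only [X_pow_comp, add_comp, mul_comp, C_comp, X_comp] at hPμν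
  obtain rfl | hN := hN.eq_or_lt
  · refine ⟨a * u, 1, mul_ne_zero ha hu, ?_⟩
    have hb : a * v + b = 0 := by simpa [hPμν] using hP₀
    rw [hPμν, eq_neg_of_add_eq_zero_right hb]
    simp only [C_mul, C_neg]
    ring
  · have hP' : derivative P = C (a * N * u) * (C u * X + C v) ^ (N - 1) := by
      rw [hPμν]
      simp only [derivative_add, derivative_C, derivative_mul, derivative_pow, derivative_X, C_mul]
      ring
    have hv : v = 0 := by
      have hP'sym := derivative_comp_C_mul_X_eq hζ₀ hP
      rw [hP'] at hP'sym
      exact eq_zero_of_C_mul_linear_pow_comp_C_mul_X_eq (by simp [ha, hu]; omega) hu (by omega)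
        hζ₁ hP'sym
    subst hv
    have hb : b = 0 := by simpa [hPμν, zero_pow (by omega : N ≠ 0)] using hP₀
    refine ⟨a * u ^ N, N, by simp [ha, hu], ?_⟩
    rw [hPμν, hb]
    simp only [C_mul, C_pow, C_0, add_zero]
    ring

theorem exists_eq_C_mul_X_pow_of_X_pow_mul_comp_X_pow_eq {p : K[X]} {s n M : ℕ} {c : K}
    (hn : 0 < n) (hc : c ≠ 0) (h : X ^ s * p.comp (X ^ n) = C c * X ^ M) :
    ∃ (d : K) (t : ℕ), d ≠ 0 ∧ p = C d * X ^ t := by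
  have hcoeff (k : ℕ) : p.coeff k = if k * n + s = M then c else 0 := by
    rw [← coeff_expand_mul hn, expand_eq_comp_X_pow, ← coeff_X_pow_mul _ s, h, coeff_C_mul_X_pow]
  have hp : p ≠ 0 := by
    rintro rfl
    simp [hc] at h
  have hdeg : p.natDegree * n + s = M := by
    by_contra hne
    have hlead := hcoeff p.natDegree
    rw [if_neg hne] at hlead
    exact leadingCoeff_ne_zero.mpr hp hlead
  refine ⟨c, p.natDegree, hc, ?_⟩
  ext k
  rw [hcoeff, coeff_C_mul_X_pow, ← hdeg]
  simp [hn.ne']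

end Polynomial

theorem stmt_15_general (R : Polynomial ℂ) (n s : ℕ) (hn : 1 < n) (hs : 0 < s)
    (h : ∃ (N : ℕ) (μ ν : Polynomial ℂ), 1 ≤ N ∧ μ.natDegree = 1 ∧ ν.natDegree = 1 ∧
      X ^ s * R.comp (X ^ n) = μ.comp ((X ^ N : Polynomial ℂ).comp ν)) :
    ∃ (c : ℂ) (t : ℕ), c ≠ 0 ∧ R = C c * X ^ t := by
  obtain ⟨N, μ, ν, hN, hμ, hν, hRμν⟩ := h
  have hζ := Complex.isPrimitiveRoot_exp n (by omega)
  obtain ⟨d, M, hd, hmonomial⟩ := exists_eq_C_mul_X_pow_of_comp_C_mul_X_eq (hζ.ne_zero (by omega))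
    (hζ.ne_one hn) (X_pow_mul_comp_X_pow_comp_C_mul_X R s hζ.pow_eq_one) (by simp [hs.ne'])
    hN hμ hν hRμν
  exact exists_eq_C_mul_X_pow_of_X_pow_mul_comp_X_pow_eq (by omega) hd hmonomial

theorem stmt_15 (R : Polynomial ℂ) (hR : R ≠ 0) (n s : ℕ) (hn : 1 < n) (hs : 0 < s)
    (h : ∃ (N : ℕ) (μ ν : Polynomial ℂ), 1 ≤ N ∧ μ.natDegree = 1 ∧ ν.natDegree = 1 ∧
      X ^ s * R.comp (X ^ n) = μ.comp ((X ^ N : Polynomial ℂ).comp ν)) :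
    ∃ (c : ℂ) (t : ℕ), c ≠ 0 ∧ R = C c * X ^ t :=
  stmt_15_general R n s hn hs h
end

section
/- For every integer n ≥ 3, the Chebyshev polynomial T_n is not linearly equivalent to X^n: there are no polynomials μ, ν of degree one with T_n = μ∘X^n∘ν. -/
open Polynomial

private lemma two_step {P : ℕ → Prop} (h0 : P 0) (h1 : P 1)
    (h : ∀ k, P k → P (k + 1) → P (k + 2)) : ∀ n, P n := by
  intro n
  induction n using Nat.strong_induction_on with
  | _ n ih =>
    match n with
    | 0 => exact h0
    | 1 => exact h1
    | (k + 2) => exact h k (ih k (by omega)) (ih (k + 1) (by omega))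

private lemma coeff_aux (p q : ℂ[X]) (i : ℕ) :
    (2 * X * p - q).coeff (i + 1) = 2 * p.coeff i - q.coeff (i + 1) := by
  simp [coeff_sub, mul_assoc, coeff_ofNat_mul, coeff_X_mul]

private lemma chebQ : ∀ m : ℕ,
    (∀ j, m < j → (Polynomial.Chebyshev.T ℂ m).coeff j = 0) ∧
    (1 ≤ m → 2 * (Polynomial.Chebyshev.T ℂ m).coeff m = 2 ^ m) ∧
    (1 ≤ m → (Polynomial.Chebyshev.T ℂ m).coeff (m - 1) = 0) ∧
    (2 ≤ m → 4 * (Polynomial.Chebyshev.T ℂ m).coeff (m - 2) = -(m : ℂ) * 2 ^ (m - 1)) := by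
  apply two_step
  · refine ⟨fun j hj => ?_, by omega, by omega, by omega⟩
    simp [Polynomial.Chebyshev.T_zero, coeff_one, (show j ≠ 0 by omega)]
  · refine ⟨fun j hj => ?_, fun _ => ?_, fun _ => ?_, by omega⟩
    · simp [Polynomial.Chebyshev.T_one, coeff_X, (show ¬(1 = j) by omega)]
    · norm_num [Polynomial.Chebyshev.T_one]
    · norm_num [Polynomial.Chebyshev.T_one]
  · intro k ⟨A0, B0, C0, D0⟩ ⟨A1, B1, C1, D1⟩
    have hT : Polynomial.Chebyshev.T ℂ ((k + 2 : ℕ) : ℤ)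
        = 2 * X * Polynomial.Chebyshev.T ℂ ((k + 1 : ℕ) : ℤ)
          - Polynomial.Chebyshev.T ℂ (k : ℕ) := by
      push_cast
      exact Polynomial.Chebyshev.T_add_two ℂ k
    refine ⟨fun j hj => ?_, fun _ => ?_, fun _ => ?_, fun _ => ?_⟩
    · obtain ⟨i, rfl⟩ : ∃ i, j = i + 1 := ⟨j - 1, by omega⟩
      rw [hT, coeff_aux, A1 i (by omega), A0 (i + 1) (by omega)]
      ring
    · have : (k + 2 : ℕ) = (k + 1) + 1 := rfl
      rw [hT, this, coeff_aux, A0 (k + 2) (by omega), B1 (by omega)]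
      ring_nf
    · have h1 : (k + 2 : ℕ) - 1 = k + 1 := by omega
      rw [hT, h1, coeff_aux, A0 (k + 1) (by omega)]
      have := C1 (by omega)
      rw [(by omega : (k + 1) - 1 = k)] at this
      rw [this]; ring
    · match k with
      | 0 =>
        have h2 : Polynomial.Chebyshev.T ℂ ((0 + 2 : ℕ) : ℤ) = 2 * X ^ 2 - 1 := by
          norm_num [Polynomial.Chebyshev.T_two]
        rw [h2]
        norm_num [coeff_sub, coeff_ofNat_mul, coeff_X_pow, coeff_one]
      | (k' + 1) =>
        have h2 : (k' + 1 + 2 : ℕ) - 2 = k' + 1 := by omega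
        rw [hT, h2, coeff_aux]
        have hD := D1 (by omega)
        rw [(by omega : (k' + 1 + 1) - 2 = k'), (by omega : (k' + 1 + 1) - 1 = k' + 1)] at hD
        have hB := B0 (by omega)
        have : 4 * (2 * (Polynomial.Chebyshev.T ℂ ((k' + 1 + 1 : ℕ) : ℤ)).coeff k'
            - (Polynomial.Chebyshev.T ℂ ((k' + 1 : ℕ) : ℤ)).coeff (k' + 1))
            = 2 * (4 * (Polynomial.Chebyshev.T ℂ ((k' + 1 + 1 : ℕ) : ℤ)).coeff k')
              - 2 * (2 * (Polynomial.Chebyshev.T ℂ ((k' + 1 : ℕ) : ℤ)).coeff (k' + 1)) := by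
          ring
        rw [this, hD, hB]
        have h3 : (k' + 1 + 2 : ℕ) - 1 = k' + 2 := by omega
        rw [h3]
        push_cast
        ring

theorem stmt_16 (n : ℕ) (hn : 3 ≤ n) :
    ¬ ∃ μ ν : Polynomial ℂ, μ.natDegree = 1 ∧ ν.natDegree = 1 ∧
      Polynomial.Chebyshev.T ℂ n = μ.comp ((X ^ n : Polynomial ℂ).comp ν) := by
  rintro ⟨μ, ν, hμ, hν, heq⟩
  set a := μ.coeff 1 with ha
  set b := μ.coeff 0 with hb
  set c := ν.coeff 1 with hc
  set d := ν.coeff 0 with hd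
  have hμ0 : μ ≠ 0 := fun h => by simp [h] at hμ
  have hν0 : ν ≠ 0 := fun h => by simp [h] at hν
  have hane : a ≠ 0 := by
    have := mt leadingCoeff_eq_zero.mp hμ0
    rwa [leadingCoeff, hμ] at this
  have hcne : c ≠ 0 := by
    have := mt leadingCoeff_eq_zero.mp hν0
    rwa [leadingCoeff, hν] at this
  have hμe : μ = C a * X + C b := eq_X_add_C_of_natDegree_le_one hμ.le
  have hνe : ν = C c * X + C d := eq_X_add_C_of_natDegree_le_one hν.le
  set e : ℂ := d / c with he
  have hfac : C c * X + C d = C c * (X + C e) := by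
    rw [mul_add, ← C_mul, he, mul_div_cancel₀ d hcne]
  have heq' : Polynomial.Chebyshev.T ℂ n = C a * (C (c ^ n) * (X + C e) ^ n) + C b := by
    rw [heq, hμe, hνe, hfac]
    simp only [pow_comp, X_comp, add_comp, mul_comp, C_comp, mul_pow, ← C_pow]
  obtain ⟨-, -, hC, hD⟩ := chebQ n
  -- coefficient at n-1 gives e = 0
  have hcoeff : ∀ j, 1 ≤ j → j ≤ n →
      (Polynomial.Chebyshev.T ℂ n).coeff j = a * (c ^ n * (e ^ (n - j) * (n.choose j : ℂ))) := by
    intro j hj1 hj2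
    rw [heq', coeff_add, coeff_C, if_neg (by omega), coeff_C_mul, coeff_C_mul,
      coeff_X_add_C_pow, add_zero]
  have he0 : e = 0 := by
    have h1 := hcoeff (n - 1) (by omega) (by omega)
    rw [hC (by omega)] at h1
    have hch : n.choose (n - 1) = n :=
      (Nat.choose_symm (show 1 ≤ n by omega)).trans (Nat.choose_one_right n)
    rw [(by omega : n - (n - 1) = 1), pow_one, hch] at h1
    have hn0 : (n : ℂ) ≠ 0 := Nat.cast_ne_zero.mpr (by omega)
    simpa [mul_eq_zero, hane, pow_ne_zero n hcne, hn0] using h1.symm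
  -- coefficient at n-2 gives contradiction
  have h2 := hcoeff (n - 2) (by omega) (by omega)
  rw [(by omega : n - (n - 2) = 2), he0] at h2
  have hz : (Polynomial.Chebyshev.T ℂ n).coeff (n - 2) = 0 := by
    rw [h2]; ring
  have := hD (by omega)
  rw [hz, mul_zero] at this
  have hne : -(n : ℂ) * 2 ^ (n - 1) ≠ 0 := by
    apply mul_ne_zero
    · exact neg_ne_zero.mpr (Nat.cast_ne_zero.mpr (by omega))
    · exact pow_ne_zero _ two_ne_zero
  exact hne this.symm
end

section
/- Let W_1, W_2 be nonconstant complex polynomials with gcd(deg W_1, deg W_2) = 1. Suppose P_1, P_2 and P̃_1, P̃_2 are polynomials with deg P_1 = deg P̃_1 = deg W_2 and deg P_2 = deg P̃_2 = deg W_1, satisfying P_1∘W_1 = P_2∘W_2 and P̃_1∘W_1 = P̃_2∘W_2. Then there exists a polynomial μ of degree one such that P̃_1 = μ∘P_1 and P̃_2 = μ∘P_2. -/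
open Polynomial

theorem stmt_17 (W₁ W₂ : Polynomial ℂ)
    (hW₁ : 0 < W₁.natDegree) (hW₂ : 0 < W₂.natDegree)
    (hgcd : Nat.gcd W₁.natDegree W₂.natDegree = 1)
    (P₁ P₂ Pt₁ Pt₂ : Polynomial ℂ)
    (hd₁ : P₁.natDegree = W₂.natDegree) (hd₁' : Pt₁.natDegree = W₂.natDegree)
    (hd₂ : P₂.natDegree = W₁.natDegree) (hd₂' : Pt₂.natDegree = W₁.natDegree)
    (h : P₁.comp W₁ = P₂.comp W₂) (h' : Pt₁.comp W₁ = Pt₂.comp W₂) :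
    ∃ μ : Polynomial ℂ, μ.natDegree = 1 ∧ Pt₁ = μ.comp P₁ ∧ Pt₂ = μ.comp P₂ := by
  have hP₁0 : P₁ ≠ 0 := fun hc => by simp [hc] at hd₁; omega
  have hPt₁0 : Pt₁ ≠ 0 := fun hc => by simp [hc] at hd₁'; omega
  have hW₁0 : W₁ ≠ 0 := fun hc => by simp [hc] at hW₁
  have hW₂0 : W₂ ≠ 0 := fun hc => by simp [hc] at hW₂
  set n := W₁.natDegree with hn
  set m := W₂.natDegree with hm
  obtain ⟨a, ha, key1⟩ : ∃ a : ℂ, a ≠ 0 ∧ Pt₁.leadingCoeff = a * P₁.leadingCoeff :=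
    ⟨Pt₁.leadingCoeff / P₁.leadingCoeff,
      div_ne_zero (leadingCoeff_ne_zero.mpr hPt₁0) (leadingCoeff_ne_zero.mpr hP₁0),
      (div_mul_cancel₀ _ (leadingCoeff_ne_zero.mpr hP₁0)).symm⟩
  -- leading coefficient relations from the compositions
  have lc1 : P₁.leadingCoeff * W₁.leadingCoeff ^ m = P₂.leadingCoeff * W₂.leadingCoeff ^ n := by
    have := congrArg leadingCoeff h
    rwa [leadingCoeff_comp (by omega), leadingCoeff_comp (by omega), hd₁, hd₂] at this
  have lc2 : Pt₁.leadingCoeff * W₁.leadingCoeff ^ m = Pt₂.leadingCoeff * W₂.leadingCoeff ^ n := by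
    have := congrArg leadingCoeff h'
    rwa [leadingCoeff_comp (by omega), leadingCoeff_comp (by omega), hd₁', hd₂'] at this
  have key2 : Pt₂.leadingCoeff = a * P₂.leadingCoeff := by
    have hw2 : W₂.leadingCoeff ≠ 0 := leadingCoeff_ne_zero.mpr hW₂0
    have e : a * P₂.leadingCoeff * W₂.leadingCoeff ^ n
        = Pt₂.leadingCoeff * W₂.leadingCoeff ^ n := by
      calc a * P₂.leadingCoeff * W₂.leadingCoeff ^ n
          = a * (P₂.leadingCoeff * W₂.leadingCoeff ^ n) := by ring
        _ = a * (P₁.leadingCoeff * W₁.leadingCoeff ^ m) := by rw [lc1]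
        _ = Pt₁.leadingCoeff * W₁.leadingCoeff ^ m := by rw [key1]; ring
        _ = Pt₂.leadingCoeff * W₂.leadingCoeff ^ n := lc2
    exact (mul_right_cancel₀ (pow_ne_zero _ hw2) e).symm
  -- the differences
  set H₁ : Polynomial ℂ := Pt₁ - C a * P₁ with hH₁def
  set H₂ : Polynomial ℂ := Pt₂ - C a * P₂ with hH₂def
  have hcomp : H₁.comp W₁ = H₂.comp W₂ := by
    simp only [hH₁def, hH₂def, sub_comp, mul_comp, C_comp, h, h']
  have hdegH₁ : H₁.natDegree < m := by
    by_cases h0 : H₁ = 0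
    · simpa [h0] using hW₂
    · have hdeg : Pt₁.degree = (C a * P₁).degree := by
        rw [degree_C_mul ha, degree_eq_natDegree hPt₁0, degree_eq_natDegree hP₁0, hd₁, hd₁']
      have hlc : Pt₁.leadingCoeff = (C a * P₁).leadingCoeff := by
        rw [leadingCoeff_mul, leadingCoeff_C, key1]
      have hlt := degree_sub_lt hdeg hPt₁0 hlc
      rw [degree_eq_natDegree hPt₁0, hd₁'] at hlt
      exact (natDegree_lt_iff_degree_lt h0).mpr (by exact_mod_cast hlt)
  have hdd : H₁.natDegree * n = H₂.natDegree * m := by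
    have := congrArg natDegree hcomp
    rwa [natDegree_comp, natDegree_comp] at this
  have hmdvd : m ∣ H₁.natDegree := by
    have hco : Nat.Coprime m n := Nat.Coprime.symm hgcd
    exact hco.dvd_of_dvd_mul_right ⟨H₂.natDegree, by rw [hdd, Nat.mul_comm]⟩
  have hH₁deg0 : H₁.natDegree = 0 := Nat.eq_zero_of_dvd_of_lt hmdvd hdegH₁
  have hH₂deg0 : H₂.natDegree = 0 := by
    rw [hH₁deg0, zero_mul] at hdd
    rcases Nat.mul_eq_zero.mp hdd.symm with h0 | h0
    · exact h0
    · omega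
  obtain ⟨c₁, hc₁⟩ := natDegree_eq_zero.mp hH₁deg0
  obtain ⟨c₂, hc₂⟩ := natDegree_eq_zero.mp hH₂deg0
  have hcc : c₁ = c₂ := by
    have e := hcomp
    rw [← hc₁, ← hc₂, C_comp, C_comp] at e
    exact C_injective e
  have e₁ : Pt₁ = C c₁ + C a * P₁ := sub_eq_iff_eq_add.mp hc₁.symm
  have e₂ : Pt₂ = C c₂ + C a * P₂ := sub_eq_iff_eq_add.mp hc₂.symm
  refine ⟨C a * X + C c₁, natDegree_linear ha, ?_, ?_⟩
  · simp only [add_comp, mul_comp, C_comp, X_comp, e₁]; ring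
  · simp only [add_comp, mul_comp, C_comp, X_comp, e₂, hcc]; ring
end

section
/- Let n ≥ 1 and let G be a subgroup of the permutation group of ZMod n containing the translation τ : x ↦ x + 1. For a divisor d of n let B_d = {x : ZMod n | d divides the natural-number representative x.val}. If d_1 and d_2 are divisors of n such that B_{d_1} and B_{d_2} are blocks for the natural action of G on ZMod n, then B_{lcm(d_1,d_2)} and B_{gcd(d_1,d_2)} are also blocks for the action of G on ZMod n. -/
open Pointwise

private lemma addRight_pow_aux (n : ℕ) (k : ℕ) :
    (Equiv.addRight (1 : ZMod n)) ^ k = Equiv.addRight (k : ZMod n) := by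
  induction k with
  | zero => ext x; simp
  | succ k ih =>
    ext x
    simp only [pow_succ, Equiv.Perm.mul_apply, ih, Equiv.coe_addRight]
    push_cast
    ring

theorem stmt_19 (n : ℕ) (hn : 1 ≤ n) (G : Subgroup (Equiv.Perm (ZMod n)))
    (hτ : Equiv.addRight (1 : ZMod n) ∈ G)
    (d₁ d₂ : ℕ) (hd₁ : d₁ ∣ n) (hd₂ : d₂ ∣ n)
    (hB₁ : MulAction.IsBlock G {x : ZMod n | d₁ ∣ x.val})
    (hB₂ : MulAction.IsBlock G {x : ZMod n | d₂ ∣ x.val}) :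
    MulAction.IsBlock G {x : ZMod n | Nat.lcm d₁ d₂ ∣ x.val} ∧
    MulAction.IsBlock G {x : ZMod n | Nat.gcd d₁ d₂ ∣ x.val} := by
  have : NeZero n := ⟨by omega⟩
  -- all translations are in G
  have htrans : ∀ v : ZMod n, Equiv.addRight v ∈ G := by
    intro v
    have : Equiv.addRight v = (Equiv.addRight (1 : ZMod n)) ^ v.val := by
      rw [addRight_pow_aux, ZMod.natCast_zmod_val]
    rw [this]
    exact pow_mem hτ _
  -- divisibility of val via the cast hom
  have memhom : ∀ (d : ℕ) (hd : d ∣ n) (z : ZMod n),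
      d ∣ z.val ↔ ZMod.castHom hd (ZMod d) z = 0 := by
    intro d hd z
    rw [← ZMod.natCast_eq_zero_iff, ZMod.natCast_val, ZMod.castHom_apply]
  have memadd : ∀ (d : ℕ) (hd : d ∣ n) (x y : ZMod n),
      d ∣ x.val → d ∣ y.val → d ∣ (x + y).val := by
    intro d hd x y hx hy
    rw [memhom d hd] at hx hy ⊢
    rw [map_add, hx, hy, add_zero]
  have memneg : ∀ (d : ℕ) (hd : d ∣ n) (x : ZMod n), d ∣ x.val → d ∣ (-x).val := by
    intro d hd x hx
    rw [memhom d hd] at hx ⊢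
    rw [map_neg, hx, neg_zero]
  -- KEY: a block of the form B_d translates cosets to cosets
  have key : ∀ (d : ℕ), d ∣ n → MulAction.IsBlock G {x : ZMod n | d ∣ x.val} →
      ∀ (σ : G) (u v : ZMod n), d ∣ (u - v).val → d ∣ (σ • u - σ • v).val := by
    intro d hd hB σ u v huv
    set B : Set (ZMod n) := {x : ZMod n | d ∣ x.val} with hBdef
    have h0 : (0 : ZMod n) ∈ B := by simp [hBdef]
    set τv : G := ⟨Equiv.addRight v, htrans v⟩ with hτv
    set τw : G := ⟨Equiv.addRight (σ • v), htrans (σ • v)⟩ with hτw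
    have h1 : σ • v ∈ (σ * τv) • B := by
      refine ⟨0, h0, ?_⟩
      show (σ * τv) • (0 : ZMod n) = σ • v
      rw [mul_smul]
      congr 1
      show (Equiv.addRight v) 0 = v
      simp
    have h2 : σ • v ∈ τw • B := by
      refine ⟨0, h0, ?_⟩
      show (Equiv.addRight (σ • v)) 0 = σ • v
      simp
    have heq : (σ * τv) • B = τw • B := hB.smul_eq_smul_of_nonempty ⟨σ • v, h1, h2⟩
    have h3 : σ • u ∈ (σ * τv) • B := by
      refine ⟨u - v, huv, ?_⟩
      show (σ * τv) • (u - v) = σ • u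
      rw [mul_smul]
      congr 1
      show (Equiv.addRight v) (u - v) = u
      simp
    rw [heq] at h3
    obtain ⟨b, hb, hbe⟩ := h3
    have hbe' : b + σ • v = σ • u := hbe
    have : σ • u - σ • v = b := by rw [← hbe']; ring
    rw [this]
    exact hb
  -- decomposition of elements of B_gcd
  have decomp : ∀ x : ZMod n, Nat.gcd d₁ d₂ ∣ x.val →
      ∃ c₁ c₂ : ZMod n, d₁ ∣ c₁.val ∧ d₂ ∣ c₂.val ∧ x = c₁ + c₂ := by
    intro x hx
    obtain ⟨m, hm⟩ := hx
    have hdvdmul : ∀ (d : ℕ) (hd : d ∣ n) (z : ZMod n), d ∣ (z * (d : ZMod n)).val := by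
      intro d hd z
      rw [memhom d hd, map_mul, map_natCast, ZMod.natCast_self, mul_zero]
    refine ⟨(m : ZMod n) * ((Nat.gcdA d₁ d₂ : ℤ) : ZMod n) * (d₁ : ZMod n),
        (m : ZMod n) * ((Nat.gcdB d₁ d₂ : ℤ) : ZMod n) * (d₂ : ZMod n),
        hdvdmul d₁ hd₁ _, hdvdmul d₂ hd₂ _, ?_⟩
    have hbez : ((Nat.gcd d₁ d₂ : ℤ) : ZMod n)
        = (((d₁ : ℤ) * Nat.gcdA d₁ d₂ + (d₂ : ℤ) * Nat.gcdB d₁ d₂ : ℤ) : ZMod n) := by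
      rw [← Nat.gcd_eq_gcd_ab]
    have hx' : x = ((Nat.gcd d₁ d₂ * m : ℕ) : ZMod n) := by
      rw [← hm, ZMod.natCast_zmod_val]
    rw [hx']
    push_cast at hbez ⊢
    linear_combination (m : ZMod n) * hbez
  set gc := Nat.gcd d₁ d₂ with hgc
  have hgcn : gc ∣ n := Nat.dvd_trans (Nat.gcd_dvd_left _ _) hd₁
  -- main step for gcd
  have sub : ∀ (σ : G) (a : ZMod n), gc ∣ a.val → gc ∣ (σ • a).val →
      ∀ x : ZMod n, gc ∣ x.val → gc ∣ (σ • x).val := by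
    intro σ a ha hσa x hx
    have hxa : gc ∣ (x - a).val := by
      rw [sub_eq_add_neg]
      exact memadd gc hgcn _ _ hx (memneg gc hgcn _ ha)
    obtain ⟨c₁, c₂, hc₁, hc₂, hcc⟩ := decomp (x - a) hxa
    have hk₂ : d₂ ∣ (σ • (a + c₂) - σ • a).val := by
      refine key d₂ hd₂ hB₂ σ _ _ ?_
      have : a + c₂ - a = c₂ := by ring
      rw [this]; exact hc₂
    have hk₁ : d₁ ∣ (σ • x - σ • (a + c₂)).val := by
      refine key d₁ hd₁ hB₁ σ _ _ ?_
      have : x - (a + c₂) = c₁ := by rw [← sub_sub, hcc]; ring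
      rw [this]; exact hc₁
    have hsplit : σ • x = (σ • x - σ • (a + c₂)) + ((σ • (a + c₂) - σ • a) + σ • a) := by
      ring
    rw [hsplit]
    refine memadd gc hgcn _ _ (Nat.dvd_trans (Nat.gcd_dvd_left _ _) hk₁)
      (memadd gc hgcn _ _ (Nat.dvd_trans (Nat.gcd_dvd_right _ _) hk₂) hσa)
  constructor
  · -- lcm: intersection of the two blocks
    have hset : {x : ZMod n | Nat.lcm d₁ d₂ ∣ x.val}
        = {x : ZMod n | d₁ ∣ x.val} ∩ {x : ZMod n | d₂ ∣ x.val} := by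
      ext x
      simp only [Set.mem_setOf_eq, Set.mem_inter_iff]
      exact Nat.lcm_dvd_iff
    rw [hset]
    exact hB₁.inter hB₂
  · rw [MulAction.isBlock_iff_smul_eq_of_mem]
    intro σ a ha hσa
    apply Set.Subset.antisymm
    · rintro y ⟨x, hx, rfl⟩
      exact sub σ a ha hσa x hx
    · intro x hx
      refine ⟨σ⁻¹ • x, ?_, smul_inv_smul σ x⟩
      exact sub σ⁻¹ (σ • a) hσa (by rw [inv_smul_smul]; exact ha) x hx
end
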